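/- Let R ⊆ Gh(I) be a B-ring and let i, j ∈ I be distinct with d(i, j) = 1 (i.e., the integers r(i) − r(j) for r ∈ R have greatest common divisor 1). Then Ext^l_R(ℤ_i, ℤ_j) = 0 for all l ≥ 0. -/

import Mathlib

set_option synthInstance.maxHeartbeats 400000
set_option maxHeartbeats 1000000

noncomputable section

open CategoryTheory

/-- A subring `R ⊆ Gh I = ∏_{i ∈ I} ℤ` is a *B-ring* if for all distinct `i, j ∈ I`
there is `r ∈ R` with `r i ≠ 0` and `r j = 0`. -/
def IsBRing {I : Type*} (R : Subring (I → ℤ)) : Prop :=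
  ∀ i j : I, i ≠ j → ∃ r ∈ R, r i ≠ 0 ∧ r j = 0

/-- `ℤ_i`: the `R`-module `ℤ` where `r ∈ R ⊆ ∏_{i ∈ I} ℤ` acts by multiplication by `r i`. -/
def ZInt {I : Type} (R : Subring (I → ℤ)) (i : I) : ModuleCat R :=
  letI : Module R ℤ := Module.compHom ℤ ((Pi.evalRingHom (fun _ => ℤ) i).comp R.subtype)
  ModuleCat.of R ℤ

/-!
An element `e ∈ R` with `e i = 1` and `e j = 0` exists because `d(i, j) = 1`. Multiplication
by `e` is a natural endomorphism of the identity functor of `R`-modules, i.e. an element of the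
centre of the category. Such elements act on `Ext^l(X, Y)` in the same way through `X` and
through `Y`, because they already do on `Hom(P, Y)` for a projective resolution `P` of `X`, by
naturality. On `ℤ_i` the element `e` acts as the identity and on `ℤ_j` as zero, so the identity
of `Ext^l(ℤ_i, ℤ_j)` is zero.
-/

namespace CategoryTheory

open Limits

section LeftDerived

variable {C D : Type*} [Category C] [Category D] [Abelian C] [HasProjectiveResolutions C]
  [Abelian D]

lemma Functor.leftDerived_map_catCenter_app (F : C ⥤ D) [F.Additive] (z : CatCenter C)
    (α : F ⟶ F) (hα : ∀ X, α.app X = F.map (z.app X)) (n : ℕ) (X : C) :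
    (F.leftDerived n).map (z.app X) = (NatTrans.leftDerived α n).app X := by
  let P := projectiveResolution X
  let g : P.complex ⟶ P.complex := (NatTrans.mapHomologicalComplex z _).app P.complex
  have hg : g ≫ P.π = P.π ≫ (ChainComplex.single₀ C).map (z.app X) := by
    ext
    rw [HomologicalComplex.comp_f, HomologicalComplex.comp_f, ChainComplex.single₀_map_f_zero]
    exact (z.naturality (P.π.f 0)).symm
  have hFg : (F.mapHomologicalComplex _).map g =
      (NatTrans.mapHomologicalComplex α _).app P.complex := by
    ext
    exact (hα _).symm
  rw [F.leftDerived_map_eq n _ g hg, P.leftDerived_app_eq α, Functor.comp_map, hFg]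

lemma NatTrans.leftDerived_zero (F G : C ⥤ D) [F.Additive] [G.Additive] (n : ℕ) :
    NatTrans.leftDerived (0 : F ⟶ G) n = 0 := by
  ext X
  let P := projectiveResolution X
  have h : (NatTrans.mapHomologicalComplex (0 : F ⟶ G) _).app P.complex = 0 := by
    ext
    rfl
  rw [P.leftDerived_app_eq, h, Functor.map_zero, zero_comp, comp_zero]
  rfl

end LeftDerived

section Ext

variable (R : Type*) [Ring R] {C : Type*} [Category C] [Abelian C] [Linear R C]
  [EnoughProjectives C]

lemma Ext_map_catCenter_app (z : CatCenter C) (n : ℕ) (X Y : C) :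
    ((Ext R C n).map (z.app X).op).app Y = ((Ext R C n).obj (.op X)).map (z.app Y) := by
  have hz : ∀ X', ((linearYoneda R C).map (z.app Y)).rightOp.app X' =
      ((linearYoneda R C).obj Y).rightOp.map (z.app X') := by
    intro X'
    refine Quiver.Hom.unop_inj (ModuleCat.hom_ext (LinearMap.ext fun f => ?_))
    dsimp
    exact z.naturality f
  exact congrArg Quiver.Hom.unop
    (((linearYoneda R C).obj Y).rightOp.leftDerived_map_catCenter_app z _ hz n X)

lemma Ext_obj_map_zero (n : ℕ) (X Y Y' : C) :
    ((Ext R C n).obj (.op X)).map (0 : Y ⟶ Y') = 0 := by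
  have h : ((linearYoneda R C).map (0 : Y ⟶ Y')).rightOp = 0 := by
    ext X'
    refine Quiver.Hom.unop_inj (ModuleCat.hom_ext (LinearMap.ext fun f => ?_))
    exact comp_zero
  change ((NatTrans.leftDerived ((linearYoneda R C).map (0 : Y ⟶ Y')).rightOp n).app X).unop
    = 0
  rw [h, NatTrans.leftDerived_zero]
  rfl

lemma isZero_Ext_of_catCenter_app (z : CatCenter C) (n : ℕ) {X Y : C} (hX : z.app X = 𝟙 X)
    (hY : z.app Y = 0) : IsZero (((Ext R C n).obj (.op X)).obj Y) := by
  rw [IsZero.iff_id_eq_zero]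
  calc 𝟙 _ = ((Ext R C n).map (z.app X).op).app Y := by simp [hX]
    _ = ((Ext R C n).obj (.op X)).map (z.app Y) := Ext_map_catCenter_app R z n X Y
    _ = 0 := by rw [hY, Ext_obj_map_zero]

end Ext

end CategoryTheory

lemma Int.one_mem_of_forall_dvd {S : AddSubgroup ℤ}
    (hS : ∀ e : ℕ, 0 < e → (∀ x ∈ S, (e : ℤ) ∣ x) → e = 1) : (1 : ℤ) ∈ S := by
  obtain ⟨g, rfl⟩ := Int.subgroup_cyclic S
  rw [← AddSubgroup.zmultiples_eq_closure] at hS ⊢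
  have hdvd : ∀ e : ℤ, e ∣ g → ∀ x ∈ AddSubgroup.zmultiples g, e ∣ x := fun e he x hx =>
    he.trans (Int.mem_zmultiples_iff.mp hx)
  have hg : g ≠ 0 := by
    rintro rfl
    exact absurd (hS 2 two_pos (hdvd 2 (dvd_zero 2))) (by norm_num)
  have hg1 : g.natAbs = 1 :=
    hS _ (Int.natAbs_pos.mpr hg) (hdvd _ (Int.natAbs_dvd.mpr dvd_rfl))
  exact Int.mem_zmultiples_iff.mpr (isUnit_iff_dvd_one.mp (Int.isUnit_iff_natAbs_eq.mpr hg1))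

lemma Subring.exists_apply_eq_one_apply_eq_zero {I : Type*} (R : Subring (I → ℤ)) (i j : I)
    (hd : ∀ e : ℕ, 0 < e → (∀ r ∈ R, (e : ℤ) ∣ (r i - r j)) → e = 1) :
    ∃ e ∈ R, e i = 1 ∧ e j = 0 := by
  let S := R.toAddSubgroup.map (Pi.evalAddMonoidHom (fun _ => ℤ) i - Pi.evalAddMonoidHom _ j)
  obtain ⟨r, hr, hrij⟩ : (1 : ℤ) ∈ S := Int.one_mem_of_forall_dvd fun e he hS =>
    hd e he fun r hr => hS _ ⟨r, hr, rfl⟩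
  simp only [AddMonoidHom.sub_apply, Pi.evalAddMonoidHom_apply] at hrij
  refine ⟨r - r j • 1, R.sub_mem hr (R.zsmul_mem R.one_mem _), by simp; omega, by simp⟩

lemma ZInt.smul_id {I : Type} (R : Subring (I → ℤ)) (i : I) (s : R) :
    s • 𝟙 (ZInt R i) = (s : I → ℤ) i • 𝟙 (ZInt R i) :=
  ModuleCat.hom_ext (LinearMap.ext fun _ => rfl)

theorem stmt_10_general (I : Type) (R : Subring (I → ℤ))
    (i j : I)
    (hd : ∀ e : ℕ, 0 < e → (∀ r ∈ R, (e : ℤ) ∣ (r i - r j)) → e = 1)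
    (l : ℕ) :
    Subsingleton (((Ext ℤ (ModuleCat R) l).obj (Opposite.op (ZInt R i))).obj (ZInt R j)) := by
  obtain ⟨e, he, hei, hej⟩ := R.exists_apply_eq_one_apply_eq_zero i j hd
  let z := Linear.toCatCenter R (ModuleCat R) ⟨e, he⟩
  have hi : z.app (ZInt R i) = 𝟙 _ := by
    simp [z, ZInt.smul_id, hei]
  have hj : z.app (ZInt R j) = 0 := by
    simp [z, ZInt.smul_id, hej]
  exact ModuleCat.subsingleton_of_isZero (isZero_Ext_of_catCenter_app ℤ z l hi hj)

/-- Let `R ⊆ Gh(I)` be a B-ring and `i ≠ j` in `I` with `d(i, j) = 1`, i.e. the only positive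
integer dividing all the integers `r i - r j` for `r ∈ R` is `1`.  Then
`Ext^l_R(ℤ_i, ℤ_j) = 0` for all `l ≥ 0`. -/
theorem stmt_10 (I : Type) [Fintype I] (R : Subring (I → ℤ)) (hR : IsBRing R)
    (i j : I) (hij : i ≠ j)
    (hd : ∀ e : ℕ, 0 < e → (∀ r ∈ R, (e : ℤ) ∣ (r i - r j)) → e = 1)
    (l : ℕ) :
    Subsingleton (((Ext ℤ (ModuleCat R) l).obj (Opposite.op (ZInt R i))).obj (ZInt R j)) :=
  stmt_10_general I R i j hd l
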